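/- arXiv:2212.04469 — 2 statements merged into one kernel-verified Lean document; each statement's English description precedes it below -/
import Mathlib

section
/- Let P be a reversible transition matrix on a finite state space with stationary distribution π, and suppose P is lazy (P(x,x) ≥ 1/2 for all x). Let A be a nonempty subset of the state space with hitting time T_A, relaxation time t_rel = 1/(1−λ_2) where λ_2 is the second-largest eigenvalue of P. Then for every initial distribution η and all times t, P_η(T_A > t) ≤ ‖η/π‖_{2,π} · exp(−t π(A)/t_rel), where ‖η/π‖_{2,π}^2 = Σ_x (η(x)/π(x))^2 π(x). -/
open Finset

/-- `t`-step transition probabilities of the chain with transition matrix `P`. -/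
def matPow {S : Type*} [Fintype S] [DecidableEq S] (P : S → S → ℝ) : ℕ → S → S → ℝ
  | 0 => fun x y => if x = y then 1 else 0
  | t + 1 => fun x y => ∑ z, matPow P t x z * P z y

/-- Transition matrix killed upon landing in `A`. -/
def killed {S : Type*} [DecidableEq S] (P : S → S → ℝ) (A : Finset S) (x y : S) : ℝ :=
  if y ∈ A then 0 else P x y

/-- Survival probability `P_x(T_A > t)` for the hitting time `T_A` of `A`. -/
def survival {S : Type*} [Fintype S] [DecidableEq S]
    (P : S → S → ℝ) (A : Finset S) (t : ℕ) (x : S) : ℝ :=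
  if x ∈ A then 0 else ∑ y, matPow (killed P A) t x y

/-- Rayleigh quotient `⟨Pf, f⟩_π / ⟨f, f⟩_π`. -/
noncomputable def rayleigh {S : Type*} [Fintype S] (P : S → S → ℝ) (π : S → ℝ)
    (f : S → ℝ) : ℝ :=
  (∑ x, π x * f x * ∑ y, P x y * f y) / ∑ x, π x * (f x) ^ 2

/-- The second-largest eigenvalue `λ₂` of a reversible chain, via its variational
characterization as the supremum of Rayleigh quotients over nonzero mean-zero
functions. -/
noncomputable def lamTwo {S : Type*} [Fintype S] (P : S → S → ℝ) (π : S → ℝ) : ℝ :=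
  sSup {r : ℝ | ∃ f : S → ℝ, (∃ x, f x ≠ 0) ∧ (∑ x, π x * f x = 0) ∧
    r = rayleigh P π f}

set_option linter.unusedSectionVars false

section Aux
variable {S : Type*} [Fintype S] [DecidableEq S]

lemma matPow_succ_left (P : S → S → ℝ) (t : ℕ) (x y : S) :
    matPow P (t + 1) x y = ∑ z, P x z * matPow P t z y := by
  induction t generalizing y with
  | zero =>
      show (∑ z, matPow P 0 x z * P z y) = ∑ z, P x z * matPow P 0 z y
      simp [matPow, eq_comm]
  | succ t ih =>
      show (∑ z, matPow P (t+1) x z * P z y) = ∑ w, P x w * matPow P (t+1) w y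
      calc (∑ z, matPow P (t+1) x z * P z y)
          = ∑ z, ∑ w, P x w * (matPow P t w z * P z y) := by
            refine Finset.sum_congr rfl fun z _ => ?_
            rw [ih z, Finset.sum_mul]
            exact Finset.sum_congr rfl fun w _ => by ring
        _ = ∑ w, P x w * ∑ z, matPow P t w z * P z y := by
            rw [Finset.sum_comm]
            exact Finset.sum_congr rfl fun w _ => by rw [Finset.mul_sum]
        _ = ∑ w, P x w * matPow P (t+1) w y := rfl

/-- `Kop P A f = ` one step of the killed chain applied to `f`, then restricted off `A`. -/
def Kop (P : S → S → ℝ) (A : Finset S) (f : S → ℝ) (x : S) : ℝ :=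
  if x ∈ A then 0 else ∑ z, killed P A x z * f z

lemma survival_succ (P : S → S → ℝ) (A : Finset S) (t : ℕ) :
    survival P A (t + 1) = Kop P A (survival P A t) := by
  funext x
  unfold survival Kop
  by_cases hx : x ∈ A
  · simp [hx]
  · rw [if_neg hx, if_neg hx]
    calc (∑ y, matPow (killed P A) (t+1) x y)
        = ∑ y, ∑ z, killed P A x z * matPow (killed P A) t z y := by
          exact Finset.sum_congr rfl fun y _ => matPow_succ_left _ t x y
      _ = ∑ z, killed P A x z * ∑ y, matPow (killed P A) t z y := by
          rw [Finset.sum_comm]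
          exact Finset.sum_congr rfl fun z _ => by rw [Finset.mul_sum]
      _ = ∑ z, killed P A x z * survival P A t z := by
          refine Finset.sum_congr rfl fun z _ => ?_
          unfold survival
          by_cases hz : z ∈ A
          · simp [killed, hz]
          · rw [if_neg hz]

lemma survival_zero (P : S → S → ℝ) (A : Finset S) (x : S) :
    survival P A 0 x = if x ∈ A then 0 else 1 := by
  unfold survival
  by_cases hx : x ∈ A <;> simp [hx, matPow]

lemma matPow_nonneg {P : S → S → ℝ} (hP : ∀ x y, 0 ≤ P x y) (t : ℕ) (x y : S) :
    0 ≤ matPow P t x y := by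
  induction t generalizing x y with
  | zero => unfold matPow; positivity
  | succ t ih =>
      show 0 ≤ ∑ z, matPow P t x z * P z y
      exact Finset.sum_nonneg fun z _ => mul_nonneg (ih x z) (hP z y)

lemma killed_nonneg {P : S → S → ℝ} (hP : ∀ x y, 0 ≤ P x y) (A : Finset S) (x y : S) :
    0 ≤ killed P A x y := by
  unfold killed; split
  · exact le_refl 0
  · exact hP x y

lemma survival_nonneg {P : S → S → ℝ} (hP : ∀ x y, 0 ≤ P x y) (A : Finset S) (t : ℕ) (x : S) :
    0 ≤ survival P A t x := by
  unfold survival; split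
  · rfl
  · exact Finset.sum_nonneg fun y _ => matPow_nonneg (fun a b => killed_nonneg hP A a b) t x y

lemma survival_vanish (P : S → S → ℝ) (A : Finset S) (t : ℕ) {x : S} (hx : x ∈ A) :
    survival P A t x = 0 := by unfold survival; rw [if_pos hx]

end Aux


section Aux2
variable {S : Type*} [Fintype S] [DecidableEq S]
variable {P : S → S → ℝ} {π : S → ℝ}

/-- The quadratic form `⟨Pf,f⟩_π`. -/
noncomputable def Tform (P : S → S → ℝ) (π : S → ℝ) (f : S → ℝ) : ℝ :=
  ∑ x, π x * f x * ∑ y, P x y * f y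

/-- `‖f‖²_π`. -/
noncomputable def Dform (π : S → ℝ) (f : S → ℝ) : ℝ := ∑ x, π x * (f x) ^ 2

lemma Trep (f : S → ℝ) :
    Tform P π f = ∑ x, ∑ y, π x * P x y * (f x * f y) := by
  unfold Tform
  refine Finset.sum_congr rfl fun x _ => ?_
  rw [Finset.mul_sum]
  exact Finset.sum_congr rfl fun y _ => by ring

lemma row_sum (hP1 : ∀ x, ∑ y, P x y = 1) (g : S → ℝ) :
    ∑ x, ∑ y, π x * P x y * g x = ∑ x, π x * g x := by
  refine Finset.sum_congr rfl fun x _ => ?_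
  calc ∑ y, π x * P x y * g x = (π x * g x) * ∑ y, P x y := by
        rw [Finset.mul_sum]; exact Finset.sum_congr rfl fun y _ => by ring
    _ = π x * g x := by rw [hP1 x, mul_one]

lemma col_sum (hP1 : ∀ x, ∑ y, P x y = 1) (hrev : ∀ x y, π x * P x y = π y * P y x)
    (g : S → ℝ) : ∑ x, ∑ y, π x * P x y * g y = ∑ y, π y * g y := by
  rw [Finset.sum_comm]
  refine Finset.sum_congr rfl fun y _ => ?_
  calc ∑ x, π x * P x y * g y = ∑ x, π y * P y x * g y := by
        refine Finset.sum_congr rfl fun x _ => by rw [hrev x y]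
    _ = (π y * g y) * ∑ x, P y x := by
        rw [Finset.mul_sum]; exact Finset.sum_congr rfl fun x _ => by ring
    _ = π y * g y := by rw [hP1 y, mul_one]

lemma Tform_nonneg (hP0 : ∀ x y, 0 ≤ P x y) (hP1 : ∀ x, ∑ y, P x y = 1)
    (hlazy : ∀ x, (1 : ℝ) / 2 ≤ P x x) (hrev : ∀ x y, π x * P x y = π y * P y x)
    (hπ0 : ∀ x, 0 ≤ π x) (f : S → ℝ) : 0 ≤ Tform P π f := by
  have hplus : ∑ x, π x * f x ^ 2 * 2 ≤ ∑ x, ∑ y, π x * P x y * (f x + f y) ^ 2 := by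
    refine Finset.sum_le_sum fun x _ => ?_
    have h1 : π x * P x x * (f x + f x) ^ 2 ≤ ∑ y, π x * P x y * (f x + f y) ^ 2 :=
      Finset.single_le_sum (f := fun y => π x * P x y * (f x + f y) ^ 2)
        (fun y _ => mul_nonneg (mul_nonneg (hπ0 x) (hP0 x y)) (sq_nonneg _))
        (Finset.mem_univ x)
    nlinarith [mul_nonneg (hπ0 x) (sq_nonneg (f x)), hlazy x, hπ0 x, sq_nonneg (f x)]
  have hid : ∑ x, ∑ y, π x * P x y * (f x * f y) * 2
      = (∑ x, ∑ y, π x * P x y * (f x + f y) ^ 2)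
        - (∑ x, ∑ y, π x * P x y * f x ^ 2) - (∑ x, ∑ y, π x * P x y * f y ^ 2) := by
    rw [← Finset.sum_sub_distrib, ← Finset.sum_sub_distrib]
    refine Finset.sum_congr rfl fun x _ => ?_
    rw [← Finset.sum_sub_distrib, ← Finset.sum_sub_distrib]
    refine Finset.sum_congr rfl fun y _ => by ring
  have h2 : ∑ x, ∑ y, π x * P x y * (f x * f y) * 2 = Tform P π f * 2 := by
    rw [Trep, Finset.sum_mul]
    exact Finset.sum_congr rfl fun x _ => by rw [Finset.sum_mul]
  have h3 : ∑ x, ∑ y, π x * P x y * f x ^ 2 = ∑ x, π x * f x ^ 2 :=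
    row_sum hP1 (fun z => f z ^ 2)
  have h4 : ∑ x, ∑ y, π x * P x y * f y ^ 2 = ∑ x, π x * f x ^ 2 :=
    col_sum hP1 hrev (fun z => f z ^ 2)
  have h5 : ∑ x, π x * f x ^ 2 * 2 = (∑ x, π x * f x ^ 2) * 2 := by
    rw [Finset.sum_mul]
  linarith
  
lemma Dform_pos (hπpos : ∀ x, 0 < π x) {f : S → ℝ} (hf : ∃ x, f x ≠ 0) :
    0 < Dform π f := by
  obtain ⟨x, hx⟩ := hf
  have : 0 < π x * f x ^ 2 := mul_pos (hπpos x) (by positivity)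
  exact lt_of_lt_of_le this <| Finset.single_le_sum
    (f := fun x => π x * f x ^ 2) (fun y _ => by have := (hπpos y).le; positivity)
    (Finset.mem_univ x)

lemma Tform_le_Dform (hP0 : ∀ x y, 0 ≤ P x y) (hP1 : ∀ x, ∑ y, P x y = 1)
    (hrev : ∀ x y, π x * P x y = π y * P y x) (hπ0 : ∀ x, 0 ≤ π x) (f : S → ℝ) :
    Tform P π f ≤ Dform π f := by
  have hminus : 0 ≤ ∑ x, ∑ y, π x * P x y * (f x - f y) ^ 2 :=
    Finset.sum_nonneg fun x _ => Finset.sum_nonneg fun y _ => by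
      have := hπ0 x; have := hP0 x y; positivity
  have hid : ∑ x, ∑ y, π x * P x y * (f x * f y) * 2
      = (∑ x, ∑ y, π x * P x y * f x ^ 2) + (∑ x, ∑ y, π x * P x y * f y ^ 2)
        - (∑ x, ∑ y, π x * P x y * (f x - f y) ^ 2) := by
    rw [← Finset.sum_add_distrib, ← Finset.sum_sub_distrib]
    refine Finset.sum_congr rfl fun x _ => ?_
    rw [← Finset.sum_add_distrib, ← Finset.sum_sub_distrib]
    refine Finset.sum_congr rfl fun y _ => by ring
  have h2 : ∑ x, ∑ y, π x * P x y * (f x * f y) * 2 = Tform P π f * 2 := by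
    rw [Trep, Finset.sum_mul]
    exact Finset.sum_congr rfl fun x _ => by rw [Finset.sum_mul]
  have h3 : ∑ x, ∑ y, π x * P x y * f x ^ 2 = ∑ x, π x * f x ^ 2 :=
    row_sum hP1 (fun z => f z ^ 2)
  have h4 : ∑ x, ∑ y, π x * P x y * f y ^ 2 = ∑ x, π x * f x ^ 2 :=
    col_sum hP1 hrev (fun z => f z ^ 2)
  unfold Dform
  linarith

lemma lamTwo_nonneg (hP0 : ∀ x y, 0 ≤ P x y) (hP1 : ∀ x, ∑ y, P x y = 1)
    (hlazy : ∀ x, (1 : ℝ) / 2 ≤ P x x) (hrev : ∀ x y, π x * P x y = π y * P y x)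
    (hπpos : ∀ x, 0 < π x) : 0 ≤ lamTwo P π := by
  apply Real.sSup_nonneg
  rintro r ⟨f, hf, -, rfl⟩
  exact div_nonneg (Tform_nonneg hP0 hP1 hlazy hrev (fun x => (hπpos x).le) f)
    (Dform_pos hπpos hf).le

lemma lamTwo_le_one (hP0 : ∀ x y, 0 ≤ P x y) (hP1 : ∀ x, ∑ y, P x y = 1)
    (hrev : ∀ x y, π x * P x y = π y * P y x) (hπpos : ∀ x, 0 < π x) :
    lamTwo P π ≤ 1 := by
  apply Real.sSup_le _ zero_le_one
  rintro r ⟨f, hf, -, rfl⟩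
  have hr : rayleigh P π f = Tform P π f / Dform π f := rfl
  rw [hr, div_le_one (Dform_pos hπpos hf)]
  exact Tform_le_Dform hP0 hP1 hrev (fun x => (hπpos x).le) f

lemma bddAbove_ray : BddAbove {r : ℝ | ∃ f : S → ℝ, (∃ x, f x ≠ 0) ∧
    (∑ x, π x * f x = 0) ∧ r = rayleigh P π f} → True := fun _ => trivial

lemma Tform_le (hP0 : ∀ x y, 0 ≤ P x y) (hP1 : ∀ x, ∑ y, P x y = 1)
    (hrev : ∀ x y, π x * P x y = π y * P y x) (hπpos : ∀ x, 0 < π x)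
    (hπ1 : ∑ x, π x = 1) (f : S → ℝ) :
    Tform P π f ≤ lamTwo P π * Dform π f
      + (1 - lamTwo P π) * (∑ x, π x * f x) ^ 2 := by
  set c : ℝ := ∑ x, π x * f x with hc
  set h : S → ℝ := fun x => f x - c with hh
  have hπ0 : ∀ x, 0 ≤ π x := fun x => (hπpos x).le
  have hmean : ∑ x, π x * h x = 0 := by
    simp only [hh, mul_sub, Finset.sum_sub_distrib, ← Finset.sum_mul, hπ1, one_mul, ← hc,
      sub_self]
  -- cross term : ∑x ∑y πx Pxy h y = 0
  have hcross : ∑ x, π x * ∑ y, P x y * h y = 0 := by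
    have : ∑ x, π x * ∑ y, P x y * h y = ∑ x, ∑ y, π x * P x y * h y := by
      refine Finset.sum_congr rfl fun x _ => ?_
      rw [Finset.mul_sum]; exact Finset.sum_congr rfl fun y _ => by ring
    rw [this, col_sum hP1 hrev h, hmean]
  -- expansion of T f
  have hTexp : Tform P π f = Tform P π h + c ^ 2 := by
    unfold Tform
    have hPf : ∀ x, ∑ y, P x y * f y = (∑ y, P x y * h y) + c := by
      intro x
      simp only [hh, mul_sub, Finset.sum_sub_distrib, ← Finset.sum_mul, hP1 x, one_mul]
      ring
    calc ∑ x, π x * f x * ∑ y, P x y * f y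
        = ∑ x, (π x * h x * (∑ y, P x y * h y)
            + c * (π x * ∑ y, P x y * h y) + c * (π x * h x) + c ^ 2 * π x) := by
          refine Finset.sum_congr rfl fun x _ => ?_
          rw [hPf x]
          show π x * f x * _ = _
          have : f x = h x + c := by simp [hh]
          rw [this]; ring
      _ = (∑ x, π x * h x * (∑ y, P x y * h y))
            + c * (∑ x, π x * ∑ y, P x y * h y) + c * (∑ x, π x * h x)
            + c ^ 2 * (∑ x, π x) := by
          simp [Finset.sum_add_distrib, Finset.mul_sum]
      _ = Tform P π h + c ^ 2 := by
          rw [hcross, hmean, hπ1, Tform]; ring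
  have hDexp : Dform π f = Dform π h + c ^ 2 := by
    unfold Dform
    calc ∑ x, π x * f x ^ 2
        = ∑ x, (π x * h x ^ 2 + 2 * c * (π x * h x) + c ^ 2 * π x) := by
          refine Finset.sum_congr rfl fun x _ => ?_
          have : f x = h x + c := by simp [hh]
          rw [this]; ring
      _ = (∑ x, π x * h x ^ 2) + 2 * c * (∑ x, π x * h x) + c ^ 2 * ∑ x, π x := by
          simp [Finset.sum_add_distrib, Finset.mul_sum]
      _ = Dform π h + c ^ 2 := by rw [hmean, hπ1, Dform]; ring
  have hTh : Tform P π h ≤ lamTwo P π * Dform π h := by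
    by_cases hzero : ∀ x, h x = 0
    · have h1 : Tform P π h = 0 := by
        unfold Tform
        refine Finset.sum_eq_zero fun x _ => by rw [hzero x]; ring
      have h2 : Dform π h = 0 := by
        unfold Dform
        refine Finset.sum_eq_zero fun x _ => by rw [hzero x]; ring
      rw [h1, h2, mul_zero]
    · push_neg at hzero
      have hbdd : BddAbove {r : ℝ | ∃ f : S → ℝ, (∃ x, f x ≠ 0) ∧
          (∑ x, π x * f x = 0) ∧ r = rayleigh P π f} := by
        refine ⟨1, ?_⟩
        rintro r ⟨g, hg, -, rfl⟩
        have hr : rayleigh P π g = Tform P π g / Dform π g := rfl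
        rw [hr, div_le_one (Dform_pos hπpos hg)]
        exact Tform_le_Dform hP0 hP1 hrev hπ0 g
      have hmem : rayleigh P π h ∈ {r : ℝ | ∃ f : S → ℝ, (∃ x, f x ≠ 0) ∧
          (∑ x, π x * f x = 0) ∧ r = rayleigh P π f} := ⟨h, hzero, hmean, rfl⟩
      have hle : rayleigh P π h ≤ lamTwo P π := le_csSup hbdd hmem
      have hD := Dform_pos hπpos hzero
      have hr : rayleigh P π h = Tform P π h / Dform π h := rfl
      rw [hr, div_le_iff₀ hD] at hle
      exact hle.trans (le_of_eq (by ring))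
  rw [hTexp, hDexp]
  nlinarith [hTh]

end Aux2

section Aux3
variable {S : Type*} [Fintype S] [DecidableEq S]
variable {P : S → S → ℝ} {π : S → ℝ} {A : Finset S}

/-- Symmetric bilinear form `⟨Pf, g⟩_π` written as a double sum. -/
noncomputable def Bf (P : S → S → ℝ) (π : S → ℝ) (f g : S → ℝ) : ℝ :=
  ∑ x, ∑ y, π x * P x y * (f y * g x)

lemma Bf_symm (hrev : ∀ x y, π x * P x y = π y * P y x) (f g : S → ℝ) :
    Bf P π f g = Bf P π g f := by
  unfold Bf
  rw [Finset.sum_comm]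
  refine Finset.sum_congr rfl fun x _ => Finset.sum_congr rfl fun y _ => ?_
  rw [hrev y x]; ring

lemma Bf_self (f : S → ℝ) : Bf P π f f = Tform P π f := by
  rw [Trep]
  exact Finset.sum_congr rfl fun x _ => Finset.sum_congr rfl fun y _ => by ring

lemma Kop_form (f g : S → ℝ) (hf : ∀ a ∈ A, f a = 0) (hg : ∀ a ∈ A, g a = 0) :
    ∑ x, π x * Kop P A f x * g x = Bf P π f g := by
  unfold Bf
  refine Finset.sum_congr rfl fun x _ => ?_
  by_cases hx : x ∈ A
  · simp [hg x hx]
  · unfold Kop killed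
    rw [if_neg hx, Finset.mul_sum, Finset.sum_mul]
    refine Finset.sum_congr rfl fun y _ => ?_
    by_cases hy : y ∈ A
    · rw [if_pos hy, hf y hy]; ring
    · rw [if_neg hy]; ring

lemma Bf_cs (hP0 : ∀ x y, 0 ≤ P x y) (hP1 : ∀ x, ∑ y, P x y = 1)
    (hlazy : ∀ x, (1 : ℝ) / 2 ≤ P x x) (hrev : ∀ x y, π x * P x y = π y * P y x)
    (hπ0 : ∀ x, 0 ≤ π x) (f g : S → ℝ) :
    (Bf P π f g) ^ 2 ≤ Bf P π f f * Bf P π g g := by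
  have hq : ∀ lam : ℝ, 0 ≤ Bf P π g g * (lam * lam) + (2 * Bf P π f g) * lam + Bf P π f f := by
    intro lam
    have hexp : Bf P π (fun z => f z + lam * g z) (fun z => f z + lam * g z)
        = Bf P π f f + lam * Bf P π f g + lam * Bf P π g f + lam * lam * Bf P π g g := by
      unfold Bf
      rw [Finset.mul_sum, Finset.mul_sum, Finset.mul_sum, ← Finset.sum_add_distrib,
        ← Finset.sum_add_distrib, ← Finset.sum_add_distrib]
      refine Finset.sum_congr rfl fun x _ => ?_
      rw [Finset.mul_sum, Finset.mul_sum, Finset.mul_sum, ← Finset.sum_add_distrib,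
        ← Finset.sum_add_distrib, ← Finset.sum_add_distrib]
      refine Finset.sum_congr rfl fun y _ => by ring
    have h0 : 0 ≤ Bf P π (fun z => f z + lam * g z) (fun z => f z + lam * g z) := by
      rw [Bf_self]
      exact Tform_nonneg hP0 hP1 hlazy hrev hπ0 _
    rw [hexp, Bf_symm hrev g f] at h0
    nlinarith [h0]
  have hd := discrim_le_zero hq
  unfold discrim at hd
  nlinarith [hd]

lemma support_cs (hπ0 : ∀ x, 0 ≤ π x) (hπ1 : ∑ x, π x = 1)
    (f : S → ℝ) (hf : ∀ a ∈ A, f a = 0) :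
    (∑ x, π x * f x) ^ 2 ≤ (1 - ∑ a ∈ A, π a) * Dform π f := by
  have hsplitf : ∑ x, π x * f x = ∑ x ∈ Aᶜ, π x * f x := by
    rw [← Finset.sum_add_sum_compl A (fun x => π x * f x)]
    rw [Finset.sum_eq_zero fun a ha => by rw [hf a ha]; ring, zero_add]
  have hsplitD : Dform π f = ∑ x ∈ Aᶜ, π x * f x ^ 2 := by
    unfold Dform
    rw [← Finset.sum_add_sum_compl A (fun x => π x * f x ^ 2)]
    rw [Finset.sum_eq_zero fun a ha => by rw [hf a ha]; ring, zero_add]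
  have hπA : ∑ x ∈ Aᶜ, π x = 1 - ∑ a ∈ A, π a := by
    have := Finset.sum_add_sum_compl A π
    rw [hπ1] at this; linarith
  have hcs := Finset.sum_mul_sq_le_sq_mul_sq Aᶜ (fun x => Real.sqrt (π x))
    (fun x => Real.sqrt (π x) * f x)
  have h1 : ∀ x, Real.sqrt (π x) * (Real.sqrt (π x) * f x) = π x * f x := by
    intro x
    rw [← mul_assoc, Real.mul_self_sqrt (hπ0 x)]
  have h2 : ∀ x, Real.sqrt (π x) ^ 2 = π x := fun x => Real.sq_sqrt (hπ0 x)
  have h3 : ∀ x, (Real.sqrt (π x) * f x) ^ 2 = π x * f x ^ 2 := by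
    intro x; rw [mul_pow, h2 x]
  simp only [h1, h2, h3] at hcs
  rw [hsplitf, hsplitD, ← hπA]
  exact hcs

lemma contraction (hP0 : ∀ x y, 0 ≤ P x y) (hP1 : ∀ x, ∑ y, P x y = 1)
    (hlazy : ∀ x, (1 : ℝ) / 2 ≤ P x x) (hrev : ∀ x y, π x * P x y = π y * P y x)
    (hπpos : ∀ x, 0 < π x) (hπ1 : ∑ x, π x = 1)
    (f : S → ℝ) (hf : ∀ a ∈ A, f a = 0) :
    Tform P π f ≤ (1 - (∑ a ∈ A, π a) * (1 - lamTwo P π)) * Dform π f := by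
  have h1 := Tform_le hP0 hP1 hrev hπpos hπ1 f
  have h2 := support_cs (fun x => (hπpos x).le) hπ1 f hf
  have h3 := lamTwo_le_one hP0 hP1 hrev hπpos
  have h4 : (1 - lamTwo P π) * (∑ x, π x * f x) ^ 2
      ≤ (1 - lamTwo P π) * ((1 - ∑ a ∈ A, π a) * Dform π f) :=
    mul_le_mul_of_nonneg_left h2 (by linarith)
  nlinarith [h1, h4]

lemma Kop_vanish (f : S → ℝ) : ∀ a ∈ A, Kop P A f a = 0 := by
  intro a ha; unfold Kop; rw [if_pos ha]

lemma Dform_nonneg (hπ0 : ∀ x, 0 ≤ π x) (f : S → ℝ) : 0 ≤ Dform π f :=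
  Finset.sum_nonneg fun x _ => mul_nonneg (hπ0 x) (sq_nonneg _)

lemma piA_le_one (hπ0 : ∀ x, 0 ≤ π x) (hπ1 : ∑ x, π x = 1) :
    ∑ a ∈ A, π a ≤ 1 := by
  rw [← hπ1]
  exact Finset.sum_le_sum_of_subset_of_nonneg (Finset.subset_univ A)
    (fun x _ _ => hπ0 x)

lemma alpha_nonneg (hP0 : ∀ x y, 0 ≤ P x y) (hP1 : ∀ x, ∑ y, P x y = 1)
    (hlazy : ∀ x, (1 : ℝ) / 2 ≤ P x x) (hrev : ∀ x y, π x * P x y = π y * P y x)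
    (hπpos : ∀ x, 0 < π x) (hπ1 : ∑ x, π x = 1) :
    0 ≤ 1 - (∑ a ∈ A, π a) * (1 - lamTwo P π) := by
  have h1 : (0:ℝ) ≤ ∑ a ∈ A, π a := Finset.sum_nonneg fun a _ => (hπpos a).le
  have h2 := piA_le_one (A := A) (fun x => (hπpos x).le) hπ1
  have h3 := lamTwo_nonneg hP0 hP1 hlazy hrev hπpos
  have h4 := lamTwo_le_one hP0 hP1 hrev hπpos
  nlinarith

lemma norm_step (hP0 : ∀ x y, 0 ≤ P x y) (hP1 : ∀ x, ∑ y, P x y = 1)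
    (hlazy : ∀ x, (1 : ℝ) / 2 ≤ P x x) (hrev : ∀ x y, π x * P x y = π y * P y x)
    (hπpos : ∀ x, 0 < π x) (hπ1 : ∑ x, π x = 1)
    (f : S → ℝ) (hf : ∀ a ∈ A, f a = 0) :
    Dform π (Kop P A f) ≤ (1 - (∑ a ∈ A, π a) * (1 - lamTwo P π)) ^ 2 * Dform π f := by
  set α := 1 - (∑ a ∈ A, π a) * (1 - lamTwo P π) with hα
  have hπ0 : ∀ x, 0 ≤ π x := fun x => (hπpos x).le
  have hα0 : 0 ≤ α := alpha_nonneg hP0 hP1 hlazy hrev hπpos hπ1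
  set g : S → ℝ := Kop P A f with hg
  have hgv : ∀ a ∈ A, g a = 0 := Kop_vanish f
  have hN : Dform π g = Bf P π f g := by
    rw [← Kop_form f g hf hgv]
    unfold Dform
    exact Finset.sum_congr rfl fun x _ => by rw [← hg]; ring
  have hcs := Bf_cs hP0 hP1 hlazy hrev hπ0 f g
  have hBff : Bf P π f f ≤ α * Dform π f := by
    rw [Bf_self]; exact contraction hP0 hP1 hlazy hrev hπpos hπ1 f hf
  have hBgg : Bf P π g g ≤ α * Dform π g := by
    rw [Bf_self]; exact contraction hP0 hP1 hlazy hrev hπpos hπ1 g hgv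
  have hBff0 : 0 ≤ Bf P π f f := by
    rw [Bf_self]; exact Tform_nonneg hP0 hP1 hlazy hrev hπ0 f
  have hBgg0 : 0 ≤ Bf P π g g := by
    rw [Bf_self]; exact Tform_nonneg hP0 hP1 hlazy hrev hπ0 g
  have hDg0 : 0 ≤ Dform π g := Dform_nonneg hπ0 g
  have hDf0 : 0 ≤ Dform π f := Dform_nonneg hπ0 f
  rcases eq_or_lt_of_le hDg0 with heq | hlt
  · rw [← heq]; positivity
  · have hsq : Dform π g ^ 2 ≤ (α * Dform π f) * (α * Dform π g) := by
      calc Dform π g ^ 2 = Bf P π f g ^ 2 := by rw [hN]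
        _ ≤ Bf P π f f * Bf P π g g := hcs
        _ ≤ (α * Dform π f) * (α * Dform π g) := by
            exact mul_le_mul hBff hBgg hBgg0 (by positivity)
    nlinarith [hsq, hlt]

end Aux3

/-- for a finite reversible lazy chain with stationary distribution `π`,
relaxation time `t_rel = 1/(1 − λ₂)` and a nonempty set `A`, for every initial
distribution `η` and all `t`,
`P_η(T_A > t) ≤ ‖η/π‖_{2,π} · exp(−t π(A)/t_rel)`. -/
theorem hitting_tail_bound
    {S : Type*} [Fintype S] [DecidableEq S]
    (P : S → S → ℝ) (π : S → ℝ) (A : Finset S) (η : S → ℝ)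
    (hP0 : ∀ x y, 0 ≤ P x y) (hP1 : ∀ x, ∑ y, P x y = 1)
    (hlazy : ∀ x, (1 : ℝ) / 2 ≤ P x x)
    (hrev : ∀ x y, π x * P x y = π y * P y x)
    (hπpos : ∀ x, 0 < π x) (hπ1 : ∑ x, π x = 1)
    (hη0 : ∀ x, 0 ≤ η x) (hη1 : ∑ x, η x = 1)
    (hA : A.Nonempty) :
    ∀ t : ℕ,
      ∑ x, η x * survival P A t x ≤
        Real.sqrt (∑ x, (η x / π x) ^ 2 * π x) *
          Real.exp (-((t : ℝ) * ∑ a ∈ A, π a) / (1 / (1 - lamTwo P π))) := by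
  intro t
  have hπ0 : ∀ x, 0 ≤ π x := fun x => (hπpos x).le
  set lam := lamTwo P π with hlam
  set πA := ∑ a ∈ A, π a with hπA
  set α : ℝ := 1 - πA * (1 - lam) with hαdef
  have hα0 : 0 ≤ α := alpha_nonneg hP0 hP1 hlazy hrev hπpos hπ1
  -- norm decay
  have key : ∀ s : ℕ, Dform π (survival P A s) ≤ (α ^ s) ^ 2 := by
    intro s
    induction s with
    | zero =>
        have h1 : Dform π (survival P A 0) ≤ 1 := by
          unfold Dform
          calc ∑ x, π x * survival P A 0 x ^ 2 ≤ ∑ x, π x := by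
                refine Finset.sum_le_sum fun x _ => ?_
                rw [survival_zero]
                by_cases hx : x ∈ A
                · rw [if_pos hx]; simpa using hπ0 x
                · rw [if_neg hx]; simp
            _ = 1 := hπ1
        simpa using h1
    | succ s ih =>
        rw [survival_succ]
        calc Dform π (Kop P A (survival P A s))
            ≤ α ^ 2 * Dform π (survival P A s) :=
              norm_step hP0 hP1 hlazy hrev hπpos hπ1 (survival P A s)
                (fun a ha => survival_vanish P A s ha)
          _ ≤ α ^ 2 * (α ^ s) ^ 2 := by
              exact mul_le_mul_of_nonneg_left ih (by positivity)
          _ = (α ^ (s + 1)) ^ 2 := by ring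
  set C : ℝ := ∑ x, (η x / π x) ^ 2 * π x with hC
  have hC0 : 0 ≤ C :=
    Finset.sum_nonneg fun x _ => mul_nonneg (sq_nonneg _) (hπ0 x)
  have hLHS0 : 0 ≤ ∑ x, η x * survival P A t x :=
    Finset.sum_nonneg fun x _ => mul_nonneg (hη0 x) (survival_nonneg hP0 A t x)
  have hCS : (∑ x, η x * survival P A t x) ^ 2 ≤ C * Dform π (survival P A t) := by
    have hcs := Finset.sum_mul_sq_le_sq_mul_sq Finset.univ
      (fun x => η x / Real.sqrt (π x)) (fun x => Real.sqrt (π x) * survival P A t x)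
    have e1 : ∀ x : S, η x / Real.sqrt (π x) * (Real.sqrt (π x) * survival P A t x)
        = η x * survival P A t x := by
      intro x
      have hs : Real.sqrt (π x) ≠ 0 := (Real.sqrt_pos.2 (hπpos x)).ne'
      field_simp
    have e2 : ∀ x : S, (η x / Real.sqrt (π x)) ^ 2 = (η x / π x) ^ 2 * π x := by
      intro x
      have hs : π x ≠ 0 := (hπpos x).ne'
      rw [div_pow, div_pow, Real.sq_sqrt (hπ0 x)]
      field_simp
    have e3 : ∀ x : S, (Real.sqrt (π x) * survival P A t x) ^ 2
        = π x * survival P A t x ^ 2 := by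
      intro x; rw [mul_pow, Real.sq_sqrt (hπ0 x)]
    simp only [e1, e2, e3] at hcs
    exact hcs
  calc ∑ x, η x * survival P A t x
      = Real.sqrt ((∑ x, η x * survival P A t x) ^ 2) := (Real.sqrt_sq hLHS0).symm
    _ ≤ Real.sqrt (C * (α ^ t) ^ 2) := by
        apply Real.sqrt_le_sqrt
        exact hCS.trans (mul_le_mul_of_nonneg_left (key t) hC0)
    _ = Real.sqrt C * α ^ t := by
        rw [Real.sqrt_mul hC0, Real.sqrt_sq (pow_nonneg hα0 t)]
    _ ≤ Real.sqrt C * Real.exp (-((t : ℝ) * πA) / (1 / (1 - lam))) := by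
        apply mul_le_mul_of_nonneg_left _ (Real.sqrt_nonneg _)
        have hexp : -((t : ℝ) * πA) / (1 / (1 - lam)) = (t : ℝ) * (-(πA * (1 - lam))) := by
          rw [one_div, div_inv_eq_mul]; ring
        rw [hexp, Real.exp_nat_mul]
        apply pow_le_pow_left₀ hα0 _ t
        have h := Real.add_one_le_exp (-(πA * (1 - lam)))
        linarith
end

section
/- Let G = (V, E) be a finite graph and let Λ(r) be the spectral profile of the simple random walk on G: Λ(r) = inf{λ(A) : π_* ≤ π(A) ≤ r}, where λ(A) is the smallest Dirichlet eigenvalue 1 − max{eigenvalues of P restricted to A} and π is the stationary distribution. Let Φ(r) = min{|∂A|/vol(A)-type conductance over sets A with π(A) ≤ r}. Then Λ(r) ≥ Φ(r)²/2 for all r. -/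
open Finset

variable {V : Type*}

/-- Dirichlet form `E_P(f) = ⟨(I − P) f, f⟩_π`. -/
def dirichletForm [Fintype V] (P : V → V → ℝ) (π : V → ℝ) (f : V → ℝ) : ℝ :=
  ∑ x, (f x - ∑ y, P x y * f y) * f x * π x

/-- The Dirichlet eigenvalue `λ(A) = 1 − λ_max(P_A)` of a set `A`, via its
variational characterization: the infimum of `E_P(f)/‖f‖²_π` over nonzero
functions supported in `A`. -/
noncomputable def dirichletEig [Fintype V] [DecidableEq V]
    (P : V → V → ℝ) (π : V → ℝ) (A : Finset V) : ℝ :=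
  sInf {r : ℝ | ∃ f : V → ℝ, (∃ x, f x ≠ 0) ∧ (∀ x ∉ A, f x = 0) ∧
    r = dirichletForm P π f / ∑ x, π x * (f x) ^ 2}

/-- Spectral profile `Λ(r) = inf {λ(A) : π_* ≤ π(A) ≤ r}`. -/
noncomputable def spectralProfile [Fintype V] [DecidableEq V]
    (P : V → V → ℝ) (π : V → ℝ) (r : ℝ) : ℝ :=
  sInf {l : ℝ | ∃ A : Finset V,
    sInf (Set.range π) ≤ ∑ a ∈ A, π a ∧ (∑ a ∈ A, π a) ≤ r ∧ l = dirichletEig P π A}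

/-- Conductance `Φ(A) = Q(A, A^c)/π(A)`. -/
noncomputable def conductance [Fintype V] [DecidableEq V]
    (P : V → V → ℝ) (π : V → ℝ) (A : Finset V) : ℝ :=
  (∑ x ∈ A, ∑ y ∈ Aᶜ, π x * P x y) / ∑ a ∈ A, π a

/-- Conductance profile `Φ(r) = min {Φ(A) : A ≠ ∅, π(A) ≤ r}`. -/
noncomputable def conductanceProfile [Fintype V] [DecidableEq V]
    (P : V → V → ℝ) (π : V → ℝ) (r : ℝ) : ℝ :=
  sInf {φ : ℝ | ∃ A : Finset V, A.Nonempty ∧ (∑ a ∈ A, π a) ≤ r ∧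
    φ = conductance P π A}

/-- Lazy simple random walk transition matrix on a finite graph. -/
noncomputable def lazySRW [Fintype V] [DecidableEq V] (G : SimpleGraph V) [DecidableRel G.Adj]
    (x y : V) : ℝ :=
  (if x = y then (1 : ℝ) else 0) / 2 +
    (if G.Adj x y then 1 / (2 * (G.degree x : ℝ)) else 0)


lemma coarea_aux [Fintype V] [DecidableEq V]
    (Q : V → V → ℝ) (π : V → ℝ) (A : Finset V) (Φ : ℝ)
    (hQ : ∀ x y, 0 ≤ Q x y) (hsym : ∀ x y, Q x y = Q y x)
    (hB : ∀ B : Finset V, B.Nonempty → B ⊆ A →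
      Φ * ∑ b ∈ B, π b ≤ ∑ x ∈ B, ∑ y ∈ Bᶜ, Q x y) :
    ∀ (n : ℕ) (u : V → ℝ), (univ.filter (fun x => u x ≠ 0)).card = n →
      (∀ x, 0 ≤ u x) → (∀ x ∉ A, u x = 0) →
      2 * Φ * ∑ x, π x * u x ≤ ∑ x, ∑ y, Q x y * |u x - u y| := by
  intro n
  induction n using Nat.strong_induction_on with
  | _ n IH =>
    intro u hcard hu0 hsupp
    set S : Finset V := univ.filter (fun x => u x ≠ 0) with hSdef
    by_cases hSe : S = ∅
    · have hz : ∀ x, u x = 0 := by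
        intro x
        by_contra hx
        have : x ∈ S := by simp [hSdef, hx]
        simp [hSe] at this
      simp [hz]
    · have hSne : S.Nonempty := nonempty_iff_ne_empty.2 hSe
      have hSsubA : S ⊆ A := by
        intro x hx
        by_contra hxA
        have := hsupp x hxA
        simp [hSdef, this] at hx
      obtain ⟨a, haS, hamin⟩ := S.exists_min_image u hSne
      set m := u a with hm
      have hm0 : 0 < m := lt_of_le_of_ne (hu0 a) (by
        have : u a ≠ 0 := by simpa [hSdef] using haS
        exact fun h => this h.symm)
      set h : V → ℝ := fun x => if x ∈ S then u x - m else 0 with hhdef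
      have hh0 : ∀ x, 0 ≤ h x := by
        intro x
        by_cases hx : x ∈ S
        · simp only [hhdef, if_pos hx]
          have := hamin x hx
          linarith
        · simp [hhdef, hx]
      have huS : ∀ x, x ∉ S → u x = 0 := by
        intro x hx
        by_contra hux
        exact hx (by simp [hSdef, hux])
      have hu_eq : ∀ x, u x = h x + m * (if x ∈ S then (1:ℝ) else 0) := by
        intro x
        by_cases hx : x ∈ S
        · simp [hhdef, hx]
        · simp [hhdef, hx, huS x hx]
      -- pointwise abs decomposition
      have habs : ∀ x y, |u x - u y| =
          |h x - h y| + m * |(if x ∈ S then (1:ℝ) else 0) - (if y ∈ S then (1:ℝ) else 0)| := by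
        intro x y
        by_cases hx : x ∈ S <;> by_cases hy : y ∈ S
        · simp [hhdef, hx, hy]
        · rw [huS y hy]
          simp only [hhdef, if_pos hx, if_neg hy, sub_zero]
          rw [abs_of_nonneg (hu0 x), abs_of_nonneg, abs_one]
          · have : u x = (u x - m) + m := by ring
            nlinarith [hamin x hx]
          · have := hamin x hx; linarith
        · rw [huS x hx]
          simp only [hhdef, if_pos hy, if_neg hx, zero_sub, abs_neg]
          rw [abs_of_nonneg (hu0 y), abs_of_nonneg, abs_one]
          · nlinarith [hamin y hy]
          · have := hamin y hy; linarith
        · rw [huS x hx, huS y hy]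
          simp [hhdef, hx, hy]
      -- support of h is smaller
      have hhsub : (univ.filter (fun x => h x ≠ 0)) ⊆ S.erase a := by
        intro x hx
        simp only [mem_filter, mem_univ, true_and] at hx
        have hxS : x ∈ S := by
          by_contra hxS
          exact hx (by simp [hhdef, hxS])
        have hxa : x ≠ a := by
          intro hxa
          subst hxa
          exact hx (by simp [hhdef, hxS, hm])
        exact mem_erase.2 ⟨hxa, hxS⟩
      have hcard' : (univ.filter (fun x => h x ≠ 0)).card < n := by
        calc (univ.filter (fun x => h x ≠ 0)).card ≤ (S.erase a).card :=
              card_le_card hhsub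
          _ < S.card := card_erase_lt_of_mem haS
          _ = n := hcard
      have hhsupp : ∀ x ∉ A, h x = 0 := by
        intro x hxA
        have : x ∉ S := fun hxS => hxA (hSsubA hxS)
        simp [hhdef, this]
      have ih := IH _ hcard' h rfl hh0 hhsupp
      -- indicator edge sum
      have hχ : ∑ x, ∑ y, Q x y *
          |(if x ∈ S then (1:ℝ) else 0) - (if y ∈ S then (1:ℝ) else 0)| =
          2 * ∑ x ∈ S, ∑ y ∈ Sᶜ, Q x y := by
        have hsplit : ∀ x : V, ∑ y, Q x y *
            |(if x ∈ S then (1:ℝ) else 0) - (if y ∈ S then (1:ℝ) else 0)| =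
            (∑ y ∈ S, Q x y * |(if x ∈ S then (1:ℝ) else 0) - 1|) +
            ∑ y ∈ Sᶜ, Q x y * |(if x ∈ S then (1:ℝ) else 0)| := by
          intro x
          rw [← sum_add_sum_compl S]
          congr 1
          · exact sum_congr rfl fun y hy => by rw [if_pos hy]
          · refine sum_congr rfl fun y hy => ?_
            have hy' : y ∉ S := mem_compl.mp hy
            simp [hy']
        calc ∑ x, ∑ y, Q x y *
              |(if x ∈ S then (1:ℝ) else 0) - (if y ∈ S then (1:ℝ) else 0)|
            = ∑ x ∈ S, (∑ y, Q x y *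
                |(if x ∈ S then (1:ℝ) else 0) - (if y ∈ S then (1:ℝ) else 0)|) +
              ∑ x ∈ Sᶜ, (∑ y, Q x y *
                |(if x ∈ S then (1:ℝ) else 0) - (if y ∈ S then (1:ℝ) else 0)|) :=
              (sum_add_sum_compl S _).symm
          _ = (∑ x ∈ S, ∑ y ∈ Sᶜ, Q x y) + ∑ x ∈ Sᶜ, ∑ y ∈ S, Q x y := by
              congr 1
              · refine sum_congr rfl fun x hx => ?_
                rw [hsplit x]
                simp [if_pos hx]
              · refine sum_congr rfl fun x hx => ?_
                rw [hsplit x]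
                have hx' : x ∉ S := by simpa using hx
                rw [if_neg hx']
                simp
          _ = 2 * ∑ x ∈ S, ∑ y ∈ Sᶜ, Q x y := by
              have hswap : ∑ x ∈ Sᶜ, ∑ y ∈ S, Q x y = ∑ x ∈ S, ∑ y ∈ Sᶜ, Q x y := by
                rw [Finset.sum_comm]
                exact sum_congr rfl fun b _ => sum_congr rfl fun c _ => hsym c b
              rw [hswap]; ring
      -- split the big sum
      have hbig : ∑ x, ∑ y, Q x y * |u x - u y| =
          (∑ x, ∑ y, Q x y * |h x - h y|) +
            m * (2 * ∑ x ∈ S, ∑ y ∈ Sᶜ, Q x y) := by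
        rw [← hχ]
        have step : ∑ x, ∑ y, Q x y * |u x - u y| =
            ∑ x, ∑ y, (Q x y * |h x - h y| +
              m * (Q x y * |(if x ∈ S then (1:ℝ) else 0) - (if y ∈ S then (1:ℝ) else 0)|)) := by
          refine Fintype.sum_congr _ _ fun x => Fintype.sum_congr _ _ fun y => ?_
          rw [habs x y]; ring
        rw [step]
        simp only [Finset.sum_add_distrib, ← Finset.mul_sum]
      -- split the mass
      have hmass : ∑ x, π x * u x = (∑ x, π x * h x) + m * ∑ x ∈ S, π x := by
        have : ∀ x, π x * u x = π x * h x + m * (if x ∈ S then π x else 0) := by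
          intro x
          rw [hu_eq x]
          by_cases hx : x ∈ S <;> simp [hx] <;> ring
        rw [Fintype.sum_congr _ _ this, Finset.sum_add_distrib, ← Finset.mul_sum]
        congr 2
        rw [Finset.sum_ite_mem, univ_inter]
      have hb := hB S hSne hSsubA
      rw [hbig, hmass]
      have := mul_le_mul_of_nonneg_left hb (le_of_lt hm0)
      linarith

lemma swap_sum [Fintype V] (P : V → V → ℝ) (π : V → ℝ)
    (hsym : ∀ x y, π x * P x y = π y * P y x) (h : V → ℝ) :
    ∑ x, ∑ y, π x * P x y * h y = ∑ x, ∑ y, π x * P x y * h x := by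
  rw [Finset.sum_comm]
  exact Finset.sum_congr rfl fun b _ => Finset.sum_congr rfl fun c _ => by
    rw [hsym b c]

lemma diag_sum [Fintype V] (P : V → V → ℝ) (π : V → ℝ)
    (hrow : ∀ x, ∑ y, P x y = 1) (h : V → ℝ) :
    ∑ x, ∑ y, π x * P x y * h x = ∑ x, π x * h x := by
  refine Fintype.sum_congr _ _ fun x => ?_
  have : ∑ y, π x * P x y * h x = (∑ y, P x y) * (π x * h x) := by
    rw [Finset.sum_mul]
    exact Finset.sum_congr rfl fun y _ => by ring
  rw [this, hrow x, one_mul]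

lemma dirichletForm_eq [Fintype V] (P : V → V → ℝ) (π : V → ℝ)
    (hrow : ∀ x, ∑ y, P x y = 1) (hsym : ∀ x y, π x * P x y = π y * P y x)
    (f : V → ℝ) :
    dirichletForm P π f = (1/2) * ∑ x, ∑ y, π x * P x y * (f x - f y)^2 := by
  have e1 : dirichletForm P π f =
      (∑ x, ∑ y, π x * P x y * (f x)^2) - ∑ x, ∑ y, π x * P x y * (f x * f y) := by
    unfold dirichletForm
    rw [← Finset.sum_sub_distrib]
    refine Fintype.sum_congr _ _ fun x => ?_
    have h1 : ∑ y, π x * P x y * (f x)^2 = (∑ y, P x y) * (π x * (f x)^2) := by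
      rw [Finset.sum_mul]; exact Finset.sum_congr rfl fun y _ => by ring
    have h2 : ∑ y, π x * P x y * (f x * f y) = (∑ y, P x y * f y) * (f x * π x) := by
      rw [Finset.sum_mul]; exact Finset.sum_congr rfl fun y _ => by ring
    rw [h1, h2, hrow x]; ring
  have e2 : ∑ x, ∑ y, π x * P x y * (f x - f y)^2 =
      (∑ x, ∑ y, π x * P x y * (f x)^2) + (∑ x, ∑ y, π x * P x y * (f y)^2)
        - 2 * ∑ x, ∑ y, π x * P x y * (f x * f y) := by
    have step : ∑ x, ∑ y, π x * P x y * (f x - f y)^2 =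
        ∑ x, ∑ y, (π x * P x y * (f x)^2 + π x * P x y * (f y)^2
          - 2 * (π x * P x y * (f x * f y))) := by
      refine Fintype.sum_congr _ _ fun x => Fintype.sum_congr _ _ fun y => ?_
      ring
    rw [step]
    simp only [Finset.sum_add_distrib, Finset.sum_sub_distrib, ← Finset.mul_sum]
  rw [e1, e2, swap_sum P π hsym (fun x => (f x)^2)]
  ring


lemma key_rayleigh [Fintype V] [DecidableEq V] (P : V → V → ℝ) (π : V → ℝ) (Φ : ℝ)
    (A : Finset V)
    (hπ : ∀ x, 0 < π x) (hP : ∀ x y, 0 ≤ P x y) (hrow : ∀ x, ∑ y, P x y = 1)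
    (hsym : ∀ x y, π x * P x y = π y * P y x) (hΦ0 : 0 ≤ Φ)
    (hB : ∀ B : Finset V, B.Nonempty → B ⊆ A →
      Φ * ∑ b ∈ B, π b ≤ ∑ x ∈ B, ∑ y ∈ Bᶜ, π x * P x y)
    (f : V → ℝ) (hf : ∃ x, f x ≠ 0) (hsupp : ∀ x ∉ A, f x = 0) :
    Φ^2/2 ≤ dirichletForm P π f / ∑ x, π x * (f x)^2 := by
  set g : V → ℝ := fun x => |f x| with hgdef
  set D : ℝ := ∑ x, π x * (f x)^2 with hDdef
  have hQ0 : ∀ x y, 0 ≤ π x * P x y := fun x y => mul_nonneg (hπ x).le (hP x y)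
  obtain ⟨x0, hx0⟩ := hf
  have hD : 0 < D := by
    refine Finset.sum_pos' (fun x _ => mul_nonneg (hπ x).le (sq_nonneg _))
      ⟨x0, Finset.mem_univ _, mul_pos (hπ x0) ?_⟩
    positivity
  -- co-area
  have hco : 2 * Φ * D ≤ ∑ x, ∑ y, π x * P x y * |(f x)^2 - (f y)^2| := by
    exact coarea_aux (fun x y => π x * P x y) π A Φ hQ0
      (fun x y => hsym x y) hB _ (fun x => (f x)^2) rfl (fun x => sq_nonneg _)
      (fun x hx => by simp [hsupp x hx])
  set S : ℝ := ∑ x, ∑ y, π x * P x y * |(f x)^2 - (f y)^2| with hSdef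
  set T : ℝ := ∑ x, ∑ y, π x * P x y * (g x - g y)^2 with hTdef
  set U : ℝ := ∑ x, ∑ y, π x * P x y * (g x + g y)^2 with hUdef
  -- Cauchy–Schwarz
  have hCS : S^2 ≤ T * U := by
    have cs := Finset.sum_mul_sq_le_sq_mul_sq (Finset.univ : Finset (V × V))
      (fun p => Real.sqrt (π p.1 * P p.1 p.2) * |g p.1 - g p.2|)
      (fun p => Real.sqrt (π p.1 * P p.1 p.2) * (g p.1 + g p.2))
    have eS : ∑ p : V × V, (Real.sqrt (π p.1 * P p.1 p.2) * |g p.1 - g p.2|) *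
        (Real.sqrt (π p.1 * P p.1 p.2) * (g p.1 + g p.2)) = S := by
      rw [hSdef, Fintype.sum_prod_type]
      refine Fintype.sum_congr _ _ fun x => Fintype.sum_congr _ _ fun y => ?_
      have h1 : (f x)^2 - (f y)^2 = (g x - g y) * (g x + g y) := by
        have : (g x)^2 = (f x)^2 := sq_abs _
        have : (g y)^2 = (f y)^2 := sq_abs _
        simp only [hgdef]
        nlinarith [sq_abs (f x), sq_abs (f y)]
      have h2 : |(f x)^2 - (f y)^2| = |g x - g y| * (g x + g y) := by
        rw [h1, abs_mul, abs_of_nonneg (by positivity : (0:ℝ) ≤ g x + g y)]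
      rw [h2]
      have h3 : Real.sqrt (π x * P x y) * Real.sqrt (π x * P x y) = π x * P x y :=
        Real.mul_self_sqrt (hQ0 x y)
      calc Real.sqrt (π x * P x y) * |g x - g y| *
            (Real.sqrt (π x * P x y) * (g x + g y))
          = (Real.sqrt (π x * P x y) * Real.sqrt (π x * P x y)) *
            (|g x - g y| * (g x + g y)) := by ring
        _ = π x * P x y * (|g x - g y| * (g x + g y)) := by rw [h3]
    have eT : ∑ p : V × V, (Real.sqrt (π p.1 * P p.1 p.2) * |g p.1 - g p.2|)^2 = T := by
      rw [hTdef, Fintype.sum_prod_type]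
      refine Fintype.sum_congr _ _ fun x => Fintype.sum_congr _ _ fun y => ?_
      rw [mul_pow, Real.sq_sqrt (hQ0 x y), sq_abs]
    have eU : ∑ p : V × V, (Real.sqrt (π p.1 * P p.1 p.2) * (g p.1 + g p.2))^2 = U := by
      rw [hUdef, Fintype.sum_prod_type]
      refine Fintype.sum_congr _ _ fun x => Fintype.sum_congr _ _ fun y => ?_
      rw [mul_pow, Real.sq_sqrt (hQ0 x y)]
    calc S^2 = (∑ p : V × V, (Real.sqrt (π p.1 * P p.1 p.2) * |g p.1 - g p.2|) *
        (Real.sqrt (π p.1 * P p.1 p.2) * (g p.1 + g p.2)))^2 := by rw [eS]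
      _ ≤ _ := cs
      _ = T * U := by rw [eT, eU]
  -- U ≤ 4 D
  have hU4 : U ≤ 4 * D := by
    have step1 : U ≤ ∑ x, ∑ y, (2 * (π x * P x y * (f x)^2) +
        2 * (π x * P x y * (f y)^2)) := by
      refine Finset.sum_le_sum fun x _ => Finset.sum_le_sum fun y _ => ?_
      have hgx : (g x)^2 = (f x)^2 := sq_abs _
      have hgy : (g y)^2 = (f y)^2 := sq_abs _
      nlinarith [hQ0 x y, sq_nonneg (g x - g y), mul_nonneg (hQ0 x y) (sq_nonneg (g x - g y))]
    have step2 : ∑ x, ∑ y, (2 * (π x * P x y * (f x)^2) +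
        2 * (π x * P x y * (f y)^2)) = 4 * D := by
      simp only [Finset.sum_add_distrib, ← Finset.mul_sum]
      rw [swap_sum P π hsym (fun x => (f x)^2), diag_sum P π hrow (fun x => (f x)^2)]
      rw [hDdef]; ring
    linarith
  -- T ≤ 2 * dirichletForm
  have hTf : T ≤ 2 * dirichletForm P π f := by
    rw [dirichletForm_eq P π hrow hsym f]
    have : T ≤ ∑ x, ∑ y, π x * P x y * (f x - f y)^2 := by
      refine Finset.sum_le_sum fun x _ => Finset.sum_le_sum fun y _ => ?_
      refine mul_le_mul_of_nonneg_left ?_ (hQ0 x y)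
      have h1 : |g x - g y| ≤ |f x - f y| := abs_abs_sub_abs_le_abs_sub _ _
      calc (g x - g y)^2 = |g x - g y|^2 := (sq_abs _).symm
        _ ≤ |f x - f y|^2 := pow_le_pow_left₀ (abs_nonneg _) h1 2
        _ = (f x - f y)^2 := sq_abs _
    linarith
  have hT0 : 0 ≤ T := by
    refine Finset.sum_nonneg fun x _ => Finset.sum_nonneg fun y _ => ?_
    exact mul_nonneg (hQ0 x y) (sq_nonneg _)
  rw [le_div_iff₀ hD]
  have c1 : (2*Φ*D)^2 ≤ T * (4*D) := by
    calc (2*Φ*D)^2 ≤ S^2 := by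
          refine pow_le_pow_left₀ ?_ hco 2
          positivity
      _ ≤ T * U := hCS
      _ ≤ T * (4*D) := mul_le_mul_of_nonneg_left hU4 hT0
  have c2 : Φ^2 * D ≤ T := by nlinarith [hD, c1]
  linarith

/-- for the (lazy) simple random walk on a finite graph `G` with
stationary distribution `π(x) ∝ deg(x)`, the spectral profile dominates half the
squared conductance profile: `Λ(r) ≥ Φ(r)²/2` for all `r`. -/
theorem spectral_profile_ge_conductance_sq
    [Fintype V] [DecidableEq V] [Nonempty V]
    (G : SimpleGraph V) [DecidableRel G.Adj]
    (hdeg : ∀ v, 0 < G.degree v) :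
    ∀ r : ℝ,
      spectralProfile (lazySRW G) (fun x => (G.degree x : ℝ) / ∑ v, (G.degree v : ℝ)) r
        ≥ (conductanceProfile (lazySRW G)
            (fun x => (G.degree x : ℝ) / ∑ v, (G.degree v : ℝ)) r) ^ 2 / 2 := by
  intro r
  set π : V → ℝ := fun x => (G.degree x : ℝ) / ∑ v, (G.degree v : ℝ) with hπdef
  set P : V → V → ℝ := lazySRW G with hPdef
  have hDsum : 0 < ∑ v, (G.degree v : ℝ) :=
    Finset.sum_pos (fun v _ => by exact_mod_cast hdeg v) univ_nonempty
  have hπ : ∀ x, 0 < π x := fun x => div_pos (by exact_mod_cast hdeg x) hDsum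
  have hP0 : ∀ x y, 0 ≤ P x y := by
    intro x y
    show (0:ℝ) ≤ lazySRW G x y
    unfold lazySRW
    split_ifs <;> positivity
  have hrow : ∀ x, ∑ y, P x y = 1 := by
    intro x
    show ∑ y, lazySRW G x y = 1
    unfold lazySRW
    rw [Finset.sum_add_distrib]
    have hdx : (G.degree x : ℝ) ≠ 0 := by
      have := hdeg x; positivity
    have h1 : ∑ y, (if x = y then (1:ℝ) else 0)/2 = 1/2 := by
      rw [← Finset.sum_div]
      simp
    have h2 : ∑ y, (if G.Adj x y then 1/(2*(G.degree x:ℝ)) else 0) = 1/2 := by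
      rw [Finset.sum_ite, Finset.sum_const, Finset.sum_const_zero, add_zero]
      have hc : (univ.filter (fun y => G.Adj x y)).card = G.degree x := by
        rw [← SimpleGraph.card_neighborFinset_eq_degree]
        congr 1
        ext y
        simp
      rw [hc, nsmul_eq_mul]
      field_simp
    rw [h1, h2]; norm_num
  have hQsym : ∀ x y, π x * P x y = π y * P y x := by
    intro x y
    by_cases hxy : x = y
    · subst hxy; rfl
    · show π x * lazySRW G x y = π y * lazySRW G y x
      unfold lazySRW
      rw [if_neg hxy, if_neg (Ne.symm hxy)]
      by_cases hadj : G.Adj x y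
      · rw [if_pos hadj, if_pos hadj.symm]
        have dx : (G.degree x:ℝ) ≠ 0 := by have := hdeg x; positivity
        have dy : (G.degree y:ℝ) ≠ 0 := by have := hdeg y; positivity
        simp only [hπdef]
        field_simp
        ring
      · rw [if_neg hadj, if_neg (fun h => hadj h.symm)]
        simp
  set Φ : ℝ := conductanceProfile P π r with hΦdef
  have hcond0 : ∀ φ ∈ {φ : ℝ | ∃ A : Finset V, A.Nonempty ∧ (∑ a ∈ A, π a) ≤ r ∧
      φ = conductance P π A}, 0 ≤ φ := by
    rintro φ ⟨A, hAne, hAr, rfl⟩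
    unfold conductance
    apply div_nonneg
    · exact Finset.sum_nonneg fun x _ => Finset.sum_nonneg fun y _ =>
        mul_nonneg (hπ x).le (hP0 x y)
    · exact Finset.sum_nonneg fun a _ => (hπ a).le
  have hΦ0 : 0 ≤ Φ := by
    rw [hΦdef, conductanceProfile]
    exact Real.sInf_nonneg hcond0
  have hΦB : ∀ B : Finset V, B.Nonempty → (∑ b ∈ B, π b) ≤ r →
      Φ * ∑ b ∈ B, π b ≤ ∑ x ∈ B, ∑ y ∈ Bᶜ, π x * P x y := by
    intro B hBne hBr
    have hπB : 0 < ∑ b ∈ B, π b := Finset.sum_pos (fun b _ => hπ b) hBne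
    have hmem : conductance P π B ∈ {φ : ℝ | ∃ A : Finset V, A.Nonempty ∧
        (∑ a ∈ A, π a) ≤ r ∧ φ = conductance P π A} := ⟨B, hBne, hBr, rfl⟩
    have hle : Φ ≤ conductance P π B := by
      rw [hΦdef, conductanceProfile]
      exact csInf_le ⟨0, hcond0⟩ hmem
    rw [conductance] at hle
    calc Φ * ∑ b ∈ B, π b ≤ ((∑ x ∈ B, ∑ y ∈ Bᶜ, π x * P x y) / ∑ b ∈ B, π b)
          * ∑ b ∈ B, π b := mul_le_mul_of_nonneg_right hle hπB.le
      _ = ∑ x ∈ B, ∑ y ∈ Bᶜ, π x * P x y := div_mul_cancel₀ _ hπB.ne'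
  have hπstar : 0 < sInf (Set.range π) := by
    obtain ⟨v, hv⟩ := (Set.range_nonempty π).csInf_mem (Set.finite_range π)
    rw [← hv]; exact hπ v
  have hELT : ∀ l : ℝ, (∃ A : Finset V,
      sInf (Set.range π) ≤ ∑ a ∈ A, π a ∧ (∑ a ∈ A, π a) ≤ r ∧ l = dirichletEig P π A) →
      Φ^2/2 ≤ l := by
    rintro l ⟨A, hA1, hA2, rfl⟩
    have hAne : A.Nonempty := by
      rcases Finset.eq_empty_or_nonempty A with h|h
      · exfalso; rw [h] at hA1; simp at hA1; linarith
      · exact h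
    have hB : ∀ B : Finset V, B.Nonempty → B ⊆ A →
        Φ * ∑ b ∈ B, π b ≤ ∑ x ∈ B, ∑ y ∈ Bᶜ, π x * P x y := by
      intro B hBne hBsub
      refine hΦB B hBne (le_trans ?_ hA2)
      exact Finset.sum_le_sum_of_subset_of_nonneg hBsub (fun x _ _ => (hπ x).le)
    rw [dirichletEig]
    refine le_csInf ?_ ?_
    · obtain ⟨a, ha⟩ := hAne
      exact ⟨_, fun x => if x ∈ A then (1:ℝ) else 0, ⟨a, by simp [ha]⟩,
        fun x hx => by simp [hx], rfl⟩
    · rintro b ⟨f, hf, hfsupp, rfl⟩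
      exact key_rayleigh P π Φ A hπ hP0 hrow hQsym hΦ0 hB f hf hfsupp
  rw [ge_iff_le, spectralProfile]
  by_cases hne : {l : ℝ | ∃ A : Finset V,
      sInf (Set.range π) ≤ ∑ a ∈ A, π a ∧ (∑ a ∈ A, π a) ≤ r ∧
      l = dirichletEig P π A}.Nonempty
  · exact le_csInf hne fun b hb => hELT b hb
  · rw [Set.not_nonempty_iff_eq_empty] at hne
    rw [hne, Real.sInf_empty]
    have hcondempty : {φ : ℝ | ∃ A : Finset V, A.Nonempty ∧ (∑ a ∈ A, π a) ≤ r ∧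
        φ = conductance P π A} = ∅ := by
      rw [Set.eq_empty_iff_forall_notMem]
      rintro φ ⟨A, hAne, hAr, rfl⟩
      apply Set.eq_empty_iff_forall_notMem.mp hne (dirichletEig P π A)
      refine ⟨A, ?_, hAr, rfl⟩
      obtain ⟨a, ha⟩ := hAne
      calc sInf (Set.range π) ≤ π a :=
            csInf_le (Set.Finite.bddBelow (Set.finite_range π)) ⟨a, rfl⟩
        _ ≤ ∑ b ∈ A, π b := Finset.single_le_sum (fun b _ => (hπ b).le) ha
    have hΦz : Φ = 0 := by
      rw [hΦdef, conductanceProfile, hcondempty, Real.sInf_empty]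
    rw [hΦz]; norm_num
end
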